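/- arXiv:2201.07923 — 2 statements merged into one kernel-verified Lean document; each statement's English description precedes it below -/
import Mathlib

section
/- Let d, N be natural numbers and M a d×d Hermitian complex matrix all of whose eigenvalues lie in [−1, 1]. Let ρ₀ be a d×d density matrix, let G₁,…,G_N be d×d unitary matrices, and for each k = 1,…,N let I_k be a finite index set, p_k : I_k → ℝ a probability vector with distinguished index 1 ∈ I_k, and S_{k,i} (i ∈ I_k) unitary matrices with S_{k,1} = I. Define recursively ρ_k = Σ_{i ∈ I_k} p_k(i) · S_{k,i} G_k ρ_{k−1} G_k† S_{k,i}†, and ρ̃_k = G_k ρ̃_{k−1} G_k† with ρ̃₀ = ρ₀. Then |Tr(M ρ_N) − Tr(M ρ̃_N)| ≤ (|Tr(M ρ̃_N)| + 1) · (1 − ∏_{k=1}^{N} p_k(1)). -/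
open scoped BigOperators
open Matrix
open scoped ComplexOrder

/-!
Write `P = ∏ₖ pₖ(1)`. Singling out the error-free branch `S_{k,1} = 1` of each noisy gate writes
`ρₖ - p₁(1)⋯pₖ(1) ρ̃ₖ` as a nonnegative combination of conjugates of `ρ_{k-1}` and of
`ρ_{k-1} - p₁(1)⋯p_{k-1}(1) ρ̃_{k-1}`, so by induction `τ = ρ_N - P ρ̃_N` is positive semidefinite.
All gates are trace preserving, so `Tr τ = 1 - P`. Diagonalising `M` by a unitary shows
`|Tr(M τ)| ≤ Tr τ` for positive semidefinite `τ`, and the claim follows from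
`Tr(M ρ_N) - Tr(M ρ̃_N) = Tr(M τ) - (1 - P) Tr(M ρ̃_N)`.
-/

theorem Fin.partialProd_last {M : Type*} [CommMonoid M] {n : ℕ} (f : Fin n → M) :
    Fin.partialProd f (Fin.last n) = ∏ i, f i := by
  rw [Fin.partialProd, Fin.val_last, List.take_of_length_le (by simp), List.prod_ofFn]

namespace Matrix

variable {𝕜 n ι : Type*} [RCLike 𝕜] [Fintype n]

theorem trace_unitary_conj [DecidableEq n] {U : Matrix n n 𝕜} (hU : U ∈ unitaryGroup n 𝕜)
    (X : Matrix n n 𝕜) :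
    (U * X * Uᴴ).trace = X.trace := by
  rw [trace_mul_cycle, ← star_eq_conjTranspose, Unitary.star_mul_self_of_mem hU, one_mul]

theorem PosSemidef.ofReal_smul_conj {ρ : Matrix n n 𝕜} (hρ : ρ.PosSemidef) {a : ℝ} (ha : 0 ≤ a)
    (S G : Matrix n n 𝕜) : ((a : 𝕜) • (S * G * ρ * Gᴴ * Sᴴ)).PosSemidef := by
  rw [Matrix.mul_assoc _ _ Sᴴ, ← conjTranspose_mul]
  exact (hρ.mul_mul_conjTranspose_same _).smul (RCLike.ofReal_nonneg.mpr ha)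

theorem PosSemidef.sum_ofReal_smul_conj {ρ : Matrix n n 𝕜} (hρ : ρ.PosSemidef) {p : ι → ℝ}
    (hp : ∀ i, 0 ≤ p i) (S : ι → Matrix n n 𝕜) (G : Matrix n n 𝕜) (s : Finset ι) :
    (∑ i ∈ s, (p i : 𝕜) • (S i * G * ρ * Gᴴ * (S i)ᴴ)).PosSemidef :=
  posSemidef_sum s fun i _ => hρ.ofReal_smul_conj (hp i) (S i) G

theorem trace_sum_ofReal_smul_conj [DecidableEq n] [Fintype ι] {S : ι → Matrix n n 𝕜}
    (hS : ∀ i, S i ∈ unitaryGroup n 𝕜) {G : Matrix n n 𝕜} (hG : G ∈ unitaryGroup n 𝕜)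
    (p : ι → ℝ) (ρ : Matrix n n 𝕜) :
    (∑ i, (p i : 𝕜) • (S i * G * ρ * Gᴴ * (S i)ᴴ)).trace = (∑ i, p i : ℝ) * ρ.trace := by
  have hconj : ∀ i, (S i * G * ρ * Gᴴ * (S i)ᴴ).trace = ρ.trace := fun i => by
    rw [Matrix.mul_assoc _ _ (S i)ᴴ, ← conjTranspose_mul, trace_unitary_conj (mul_mem (hS i) hG)]
  simp_rw [trace_sum, trace_smul, hconj, smul_eq_mul, ← Finset.sum_mul]
  push_cast
  rfl

theorem PosSemidef.sum_ofReal_smul_conj_sub [DecidableEq n] [Fintype ι] [DecidableEq ι]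
    {ρ ρt : Matrix n n 𝕜} (hρ : ρ.PosSemidef) {a : ℝ} (hsub : (ρ - (a : 𝕜) • ρt).PosSemidef)
    {p : ι → ℝ} (hp : ∀ i, 0 ≤ p i) {S : ι → Matrix n n 𝕜} {o : ι} (hSo : S o = 1)
    (G : Matrix n n 𝕜) :
    (∑ i, (p i : 𝕜) • (S i * G * ρ * Gᴴ * (S i)ᴴ) -
      ((a * p o : ℝ) : 𝕜) • (G * ρt * Gᴴ)).PosSemidef := by
  have hsplit : ∑ i, (p i : 𝕜) • (S i * G * ρ * Gᴴ * (S i)ᴴ) -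
      ((a * p o : ℝ) : 𝕜) • (G * ρt * Gᴴ) =
      ∑ i ∈ Finset.univ.erase o, (p i : 𝕜) • (S i * G * ρ * Gᴴ * (S i)ᴴ) +
        -- the error-free term, kept in the shape of the others with `S o = 1`
        (p o : 𝕜) • (1 * G * (ρ - (a : 𝕜) • ρt) * Gᴴ * 1ᴴ) := by
    rw [← Finset.add_sum_erase _ _ (Finset.mem_univ o), hSo]
    simp only [conjTranspose_one, Matrix.one_mul, Matrix.mul_one, Matrix.mul_sub,
      Matrix.sub_mul, Matrix.mul_smul, Matrix.smul_mul]
    push_cast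
    module
  rw [hsplit]
  exact (hρ.sum_ofReal_smul_conj hp S G _).add (hsub.ofReal_smul_conj (hp o) 1 G)

theorem IsHermitian.norm_trace_mul_le [DecidableEq n] {M τ : Matrix n n 𝕜}
    (hM : M.IsHermitian) {c : ℝ} (hc : ∀ i, |hM.eigenvalues i| ≤ c) (hτ : τ.PosSemidef) :
    ‖(M * τ).trace‖ ≤ c * RCLike.re τ.trace := by
  set U : Matrix n n 𝕜 := ↑hM.eigenvectorUnitary
  set B := star U * τ * U
  have hB : B.PosSemidef := hτ.conjTranspose_mul_mul_same U
  have hBτ : B.trace = τ.trace := by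
    rw [trace_mul_cycle, Unitary.mul_star_self_of_mem hM.eigenvectorUnitary.2, one_mul]
  have htrace : (M * τ).trace = ∑ i, (hM.eigenvalues i : 𝕜) * B i i := by
    conv_lhs => rw [hM.spectral_theorem, Unitary.conjStarAlgAut_apply]
    rw [Matrix.mul_assoc, Matrix.mul_assoc, trace_mul_comm, Matrix.mul_assoc]
    simp only [trace, diag, diagonal_mul, Function.comp_apply]
    rfl
  have hnorm : ∀ i, ‖B i i‖ = RCLike.re (B i i) := fun i => by
    simpa using congrArg RCLike.re (RCLike.norm_of_nonneg' hB.diag_nonneg)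
  calc ‖(M * τ).trace‖ ≤ ∑ i, |hM.eigenvalues i| * RCLike.re (B i i) := by
        rw [htrace]
        refine (norm_sum_le _ _).trans_eq (Finset.sum_congr rfl fun i _ => ?_)
        rw [norm_mul, RCLike.norm_ofReal, hnorm]
    _ ≤ ∑ i, c * RCLike.re (B i i) :=
        Finset.sum_le_sum fun i _ => mul_le_mul_of_nonneg_right (hc i) (hnorm i ▸ norm_nonneg _)
    _ = c * RCLike.re τ.trace := by
        rw [← Finset.mul_sum, ← hBτ, trace, map_sum]
        rfl

theorem norm_trace_mul_sub_le_of_posSemidef_sub [DecidableEq n] {M : Matrix n n 𝕜}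
    (hM : M.IsHermitian) (hMeig : ∀ i, |hM.eigenvalues i| ≤ 1) {ρ ρt : Matrix n n 𝕜}
    (hρ : ρ.trace = 1) (hρt : ρt.trace = 1) {P : ℝ} (hsub : (ρ - (P : 𝕜) • ρt).PosSemidef) :
    ‖(M * ρ).trace - (M * ρt).trace‖ ≤ (‖(M * ρt).trace‖ + 1) * (1 - P) := by
  have htrace : RCLike.re (ρ - (P : 𝕜) • ρt).trace = 1 - P := by
    rw [trace_sub, trace_smul, hρ, hρt, smul_eq_mul, mul_one, map_sub, RCLike.one_re,
      RCLike.ofReal_re]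
  have hP : 0 ≤ 1 - P := by
    have := RCLike.re_le_re hsub.trace_nonneg
    rwa [map_zero, htrace] at this
  have hsplit : (M * ρ).trace - (M * ρt).trace =
      (M * (ρ - (P : 𝕜) • ρt)).trace - ((1 - P : ℝ) : 𝕜) * (M * ρt).trace := by
    rw [Matrix.mul_sub, trace_sub, Matrix.mul_smul, trace_smul, smul_eq_mul]
    push_cast
    ring
  calc ‖(M * ρ).trace - (M * ρt).trace‖
      ≤ ‖(M * (ρ - (P : 𝕜) • ρt)).trace‖ + ‖((1 - P : ℝ) : 𝕜) * (M * ρt).trace‖ :=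
        hsplit ▸ norm_sub_le _ _
    _ ≤ 1 * (1 - P) + (1 - P) * ‖(M * ρt).trace‖ := by
        rw [norm_mul, RCLike.norm_of_nonneg hP, ← htrace]
        exact add_le_add_left (hM.norm_trace_mul_le hMeig hsub) _
    _ = (‖(M * ρt).trace‖ + 1) * (1 - P) := by ring

end Matrix

theorem stmt4_general (d N : ℕ)
    (M : Matrix (Fin d) (Fin d) ℂ) (hM : M.IsHermitian)
    (hMeig : ∀ i, hM.eigenvalues i ∈ Set.Icc (-1 : ℝ) 1)
    (ρ₀ : Matrix (Fin d) (Fin d) ℂ) (hρ₀ : ρ₀.PosSemidef) (hρ₀tr : ρ₀.trace = 1)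
    (G : Fin N → Matrix (Fin d) (Fin d) ℂ)
    (hG : ∀ k, G k ∈ Matrix.unitaryGroup (Fin d) ℂ)
    (ι : Fin N → Type) [∀ k, Fintype (ι k)]
    (o : ∀ k, ι k)
    (p : ∀ k, ι k → ℝ)
    (hp0 : ∀ k i, 0 ≤ p k i) (hp1 : ∀ k, ∑ i, p k i = 1)
    (S : ∀ k, ι k → Matrix (Fin d) (Fin d) ℂ)
    (hS : ∀ k i, S k i ∈ Matrix.unitaryGroup (Fin d) ℂ)
    (hSo : ∀ k, S k (o k) = 1)
    (ρ : ℕ → Matrix (Fin d) (Fin d) ℂ) (hρ0 : ρ 0 = ρ₀)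
    (hρ : ∀ k : Fin N,
      ρ (k + 1) = ∑ i, (p k i : ℂ) • (S k i * G k * ρ k * (G k)ᴴ * (S k i)ᴴ))
    (ρt : ℕ → Matrix (Fin d) (Fin d) ℂ) (hρt0 : ρt 0 = ρ₀)
    (hρt : ∀ k : Fin N, ρt (k + 1) = G k * ρt k * (G k)ᴴ) :
    ‖(M * ρ N).trace - (M * ρt N).trace‖ ≤
      (‖(M * ρt N).trace‖ + 1) * (1 - ∏ k, p k (o k)) := by
  classical
  have hstate : ∀ j : Fin (N + 1), (ρ j).PosSemidef ∧ (ρ j).trace = 1 ∧ (ρt j).trace = 1 ∧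
      (ρ j - ((Fin.partialProd (fun k => p k (o k)) j : ℝ) : ℂ) • ρt j).PosSemidef := by
    intro j
    induction j using Fin.induction with
    | zero => simpa [hρ0, hρt0, hρ₀tr, PosSemidef.zero] using hρ₀
    | succ k ih =>
      rw [Fin.val_castSucc] at ih
      obtain ⟨hρk, htr, htrt, hsub⟩ := ih
      rw [Fin.val_succ, hρ k, hρt k, Fin.partialProd_succ]
      refine ⟨hρk.sum_ofReal_smul_conj (hp0 k) _ _ _, ?_, ?_,
        hρk.sum_ofReal_smul_conj_sub hsub (hp0 k) (hSo k) _⟩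
      · refine (trace_sum_ofReal_smul_conj (hS k) (hG k) _ _).trans ?_
        rw [hp1, htr, RCLike.ofReal_one, one_mul]
      · rw [trace_unitary_conj (hG k), htrt]
  obtain ⟨-, htr, htrt, hsub⟩ := hstate (Fin.last N)
  rw [Fin.partialProd_last] at hsub
  exact norm_trace_mul_sub_le_of_posSemidef_sub hM (fun i => abs_le.mpr (hMeig i)) htr htrt hsub

/-- intermediate inequality in the proof of Proposition 2:
`|Tr(M ρ_N) - Tr(M ρ̃_N)| ≤ (|Tr(M ρ̃_N)| + 1)(1 - ∏_k p_k(1))`. -/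
theorem stmt4 (d N : ℕ) (hd : 0 < d)
    (M : Matrix (Fin d) (Fin d) ℂ) (hM : M.IsHermitian)
    (hMeig : ∀ i, hM.eigenvalues i ∈ Set.Icc (-1 : ℝ) 1)
    (ρ₀ : Matrix (Fin d) (Fin d) ℂ) (hρ₀ : ρ₀.PosSemidef) (hρ₀tr : ρ₀.trace = 1)
    (G : Fin N → Matrix (Fin d) (Fin d) ℂ)
    (hG : ∀ k, G k ∈ Matrix.unitaryGroup (Fin d) ℂ)
    (ι : Fin N → Type) [∀ k, Fintype (ι k)]
    (o : ∀ k, ι k)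
    (p : ∀ k, ι k → ℝ)
    (hp0 : ∀ k i, 0 ≤ p k i) (hp1 : ∀ k, ∑ i, p k i = 1)
    (S : ∀ k, ι k → Matrix (Fin d) (Fin d) ℂ)
    (hS : ∀ k i, S k i ∈ Matrix.unitaryGroup (Fin d) ℂ)
    (hSo : ∀ k, S k (o k) = 1)
    (ρ : ℕ → Matrix (Fin d) (Fin d) ℂ) (hρ0 : ρ 0 = ρ₀)
    (hρ : ∀ k : Fin N,
      ρ (k + 1) = ∑ i, (p k i : ℂ) • (S k i * G k * ρ k * (G k)ᴴ * (S k i)ᴴ))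
    (ρt : ℕ → Matrix (Fin d) (Fin d) ℂ) (hρt0 : ρt 0 = ρ₀)
    (hρt : ∀ k : Fin N, ρt (k + 1) = G k * ρt k * (G k)ᴴ) :
    ‖(M * ρ N).trace - (M * ρt N).trace‖ ≤
      (‖(M * ρt N).trace‖ + 1) * (1 - ∏ k, p k (o k)) :=
  stmt4_general d N M hM hMeig ρ₀ hρ₀ hρ₀tr G hG ι o p hp0 hp1 S hS hSo ρ hρ0 hρ ρt hρt0 hρt
end

section
/- Let n, N_G be natural numbers, N_s a positive natural number, and d = 4^n. On a probability space let c₁,…,c_{N_G} be mutually independent square-integrable random vectors in ℝ^d satisfying, for every k and all coordinates i, j: E[c_k(i)] = 1 and |E[c_k(i) c_k(j)] − 1| ≤ 2/N_s. Let G₁,…,G_{N_G} be d×d real orthogonal matrices, v₀ ∈ ℝ^d with ‖v₀‖ = 1, V₀ = v₀, V_k = diag(c_k) · G_k · V_{k−1}, and μ = G_{N_G} ⋯ G₁ v₀. Then for every w ∈ ℝ^d with ‖w‖ ≤ 2^{n/2}, the root-mean-square error satisfies √(E[(wᵀ V_{N_G} − wᵀ μ)²]) ≤ 2^{n/2} √(exp(2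 N_G / N_s) − 1). -/
open scoped BigOperators
open Matrix MeasureTheory ProbabilityTheory

noncomputable def vecEnorm {ι : Type*} [Fintype ι] (v : ι → ℝ) : ℝ :=
  Real.sqrt (∑ i, v i ^ 2)

/-!
Let `μ_m` be the noise-free state after `m` gates. The state `V_m` is a measurable function of
`c_0, …, c_{m-1}`, so the fresh noise `c_m` is independent of it. Since `E c_m = 1`, this gives
`E V_{m+1} = G_m E V_m`, hence `E V_{N_G} = μ`. Since `G_m` is orthogonal and
`E c_m(i)² ≤ 1 + 2/N_s`, it also gives `E‖V_{m+1}‖² ≤ (1 + 2/N_s) E‖V_m‖²`. Therefore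
`E‖V - μ‖² = E‖V‖² - ‖μ‖² ≤ (1 + 2/N_s)^{N_G} - 1 ≤ exp(2 N_G/N_s) - 1`, and Cauchy–Schwarz
with `‖w‖² ≤ 2^n` bounds the mean square error of `wᵀV`.
-/

theorem sum_sq_mulVec_of_mem_orthogonalGroup {m : Type*} [Fintype m] [DecidableEq m]
    {A : Matrix m m ℝ} (hA : A ∈ orthogonalGroup m ℝ) (v : m → ℝ) :
    ∑ i, (A *ᵥ v) i ^ 2 = ∑ i, v i ^ 2 := by
  have hAA : Aᵀ * A = 1 := by simpa using (mem_orthogonalGroup_iff' m ℝ).1 hA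
  simpa [dotProduct, sq] using
    show A *ᵥ v ⬝ᵥ A *ᵥ v = v ⬝ᵥ v by
      rw [dotProduct_mulVec, vecMul_mulVec, hAA, vecMul_one]

theorem List.prod_reverse_take_ofFn_succ {M : Type*} [Monoid M] {N : ℕ} (f : Fin N → M)
    (k : Fin N) :
    ((List.ofFn f).take (k + 1)).reverse.prod = f k * ((List.ofFn f).take k).reverse.prod := by
  rw [List.take_add_one, List.getElem?_ofFn]
  simp

theorem Real.one_add_pow_le_exp_mul {x : ℝ} (hx : -1 ≤ x) (N : ℕ) :
    (1 + x) ^ N ≤ Real.exp (N * x) := by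
  rw [Real.exp_nat_mul]
  exact pow_le_pow_left₀ (by linarith) (by linarith [Real.add_one_le_exp x]) N

theorem measurable_mulVec {d : Type*} [Fintype d] (A : Matrix d d ℝ) :
    Measurable fun v : d → ℝ => A *ᵥ v :=
  (LinearMap.toContinuousLinearMap (mulVecLin A)).measurable

theorem ProbabilityTheory.iIndepFun.indepFun_comp_finset {Ω ι β γ : Type*} [MeasurableSpace Ω]
    {μ : Measure Ω} [MeasurableSpace β] [MeasurableSpace γ] {f : ι → Ω → β}
    (h : iIndepFun f μ) (hf : ∀ i, AEMeasurable (f i) μ) {T : Finset ι} {k : ι} (hk : k ∉ T)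
    {ψ : (T → β) → γ} (hψ : Measurable ψ) :
    IndepFun (f k) (fun ω => ψ fun i : T => f i ω) μ :=
  (h.indepFun_finset₀ {k} T (Finset.disjoint_singleton_left.2 hk) hf).comp
    (measurable_pi_apply (⟨k, Finset.mem_singleton_self k⟩ : ({k} : Finset ι))) hψ

section RandomVector

variable {Ω d : Type*} [MeasurableSpace Ω] {μ : Measure Ω} {X Y : Ω → d → ℝ}

theorem ProbabilityTheory.IndepFun.eval {i j : d} (hXY : IndepFun X Y μ) :
    IndepFun (X · i) (Y · j) μ :=
  hXY.comp (measurable_pi_apply i) (measurable_pi_apply j)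

variable [Fintype d]

theorem memLp_mulVec {p : ENNReal} (A : Matrix d d ℝ) (hY : MemLp Y p μ) :
    MemLp (fun ω => A *ᵥ Y ω) p μ :=
  (LinearMap.toContinuousLinearMap (mulVecLin A)).comp_memLp' hY

theorem integral_mulVec (A : Matrix d d ℝ) (hY : Integrable Y μ) :
    ∫ ω, A *ᵥ Y ω ∂μ = A *ᵥ ∫ ω, Y ω ∂μ :=
  (LinearMap.toContinuousLinearMap (mulVecLin A)).integral_comp_comm hY

theorem ProbabilityTheory.IndepFun.memLp_two_mul (hXY : IndepFun X Y μ) (hX : MemLp X 2 μ)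
    (hY : MemLp Y 2 μ) : MemLp (X * Y) 2 μ := by
  refine memLp_pi_iff.2 fun i => ?_
  have hXi := hX.eval i
  have hYi := hY.eval i
  refine (memLp_two_iff_integrable_sq (hXi.1.mul hYi.1)).2 ?_
  simp only [Pi.mul_apply, mul_pow]
  exact (hXY.eval.comp (measurable_id.pow_const 2) (measurable_id.pow_const 2)).integrable_mul
    hXi.integrable_sq hYi.integrable_sq

theorem ProbabilityTheory.IndepFun.integral_sum_sq_mul_le (hXY : IndepFun X Y μ)
    (hX : MemLp X 2 μ) (hY : MemLp Y 2 μ) {C : ℝ} (hC : ∀ i, ∫ ω, X ω i ^ 2 ∂μ ≤ C) :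
    ∫ ω, ∑ i, (X ω i * Y ω i) ^ 2 ∂μ ≤ C * ∫ ω, ∑ i, Y ω i ^ 2 ∂μ := by
  have hXY_sq : ∀ i, ∫ ω, (X ω i * Y ω i) ^ 2 ∂μ =
      (∫ ω, X ω i ^ 2 ∂μ) * ∫ ω, Y ω i ^ 2 ∂μ := fun i => by
    simp only [mul_pow]
    exact hXY.integral_fun_comp_mul_comp (f := fun x => x i ^ 2) (g := fun y => y i ^ 2)
      hX.1.aemeasurable hY.1.aemeasurable
      ((measurable_pi_apply i).pow_const 2).aestronglyMeasurable
      ((measurable_pi_apply i).pow_const 2).aestronglyMeasurable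
  have hint : ∀ i, Integrable (fun ω => (X ω i * Y ω i) ^ 2) μ :=
    fun i => ((hXY.memLp_two_mul hX hY).eval i).integrable_sq
  rw [integral_finsetSum _ fun i _ => hint i,
    integral_finsetSum _ fun i _ => (hY.eval i).integrable_sq, Finset.mul_sum]
  exact Finset.sum_le_sum fun i _ => (hXY_sq i).trans_le <|
    mul_le_mul_of_nonneg_right (hC i) (integral_nonneg fun ω => sq_nonneg _)

variable [IsProbabilityMeasure μ]

theorem ProbabilityTheory.IndepFun.integral_mul_pi (hXY : IndepFun X Y μ) (hX : MemLp X 2 μ)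
    (hY : MemLp Y 2 μ) : ∫ ω, X ω * Y ω ∂μ = (∫ ω, X ω ∂μ) * ∫ ω, Y ω ∂μ := by
  funext i
  rw [eval_integral (f := fun ω => X ω * Y ω)
      (integrable_pi_iff.1 ((hXY.memLp_two_mul hX hY).integrable one_le_two)),
    Pi.mul_apply, eval_integral (integrable_pi_iff.1 (hX.integrable one_le_two)),
    eval_integral (integrable_pi_iff.1 (hY.integrable one_le_two))]
  exact hXY.eval.integral_mul_eq_mul_integral (hX.eval i).1 (hY.eval i).1

theorem integral_sq_dotProduct_sub_integral_le (hY : MemLp Y 2 μ) (w : d → ℝ) :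
    ∫ ω, (w ⬝ᵥ Y ω - w ⬝ᵥ ∫ ω, Y ω ∂μ) ^ 2 ∂μ ≤
      (∑ i, w i ^ 2) * (∫ ω, ∑ i, Y ω i ^ 2 ∂μ - ∑ i, (∫ ω, Y ω ∂μ) i ^ 2) := by
  set m := ∫ ω, Y ω ∂μ
  have hYm : ∀ i, MemLp (fun ω => Y ω i - m i) 2 μ := fun i => (hY.eval i).sub (memLp_const _)
  have hm : ∀ i, m i = ∫ ω, Y ω i ∂μ :=
    eval_integral (integrable_pi_iff.1 (hY.integrable one_le_two))
  have cauchy_schwarz : ∀ ω,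
      (w ⬝ᵥ Y ω - w ⬝ᵥ m) ^ 2 ≤ (∑ i, w i ^ 2) * ∑ i, (Y ω i - m i) ^ 2 := fun ω => by
    rw [← dotProduct_sub]
    exact Finset.sum_mul_sq_le_sq_mul_sq _ _ _
  calc ∫ ω, (w ⬝ᵥ Y ω - w ⬝ᵥ m) ^ 2 ∂μ
      ≤ ∫ ω, (∑ i, w i ^ 2) * ∑ i, (Y ω i - m i) ^ 2 ∂μ :=
        integral_mono_of_nonneg (ae_of_all _ fun ω => sq_nonneg _)
          ((integrable_finsetSum _ fun i _ => (hYm i).integrable_sq).const_mul _)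
          (ae_of_all _ cauchy_schwarz)
    _ = (∑ i, w i ^ 2) * ∑ i, Var[fun ω => Y ω i; μ] := by
        rw [integral_const_mul, integral_finsetSum _ fun i _ => (hYm i).integrable_sq]
        refine congrArg _ (Finset.sum_congr rfl fun i _ => ?_)
        rw [variance_eq_integral (hY.eval i).1.aemeasurable, hm]
    _ = (∑ i, w i ^ 2) * (∫ ω, ∑ i, Y ω i ^ 2 ∂μ - ∑ i, m i ^ 2) := by
        rw [integral_finsetSum _ fun i _ => (hY.eval i).integrable_sq, ← Finset.sum_sub_distrib]
        refine congrArg _ (Finset.sum_congr rfl fun i _ => ?_)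
        rw [variance_eq_sub (hY.eval i), hm]
        rfl

end RandomVector

section NoisyOrbit

variable {Ω d : Type*} [Fintype d] {N : ℕ}
  {c : Fin N → Ω → d → ℝ} {G : Fin N → Matrix d d ℝ} {v₀ : d → ℝ} {V : ℕ → Ω → d → ℝ}

structure IsNoisyOrbit (c : Fin N → Ω → d → ℝ) (G : Fin N → Matrix d d ℝ) (v₀ : d → ℝ)
    (V : ℕ → Ω → d → ℝ) : Prop where
  zero : ∀ ω, V 0 ω = v₀
  succ : ∀ (k : Fin N) ω, V (k + 1) ω = c k ω * G k *ᵥ V k ω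

theorem IsNoisyOrbit.exists_measurable_eq_comp (hV : IsNoisyOrbit c G v₀ V) :
    ∀ m ≤ N, ∃ ψ : (({k | (k : ℕ) < m} : Finset (Fin N)) → d → ℝ) → d → ℝ,
      Measurable ψ ∧ ∀ ω, V m ω = ψ fun k => c k ω := by
  intro m
  induction m with
  | zero => exact fun _ => ⟨fun _ => v₀, measurable_const, hV.zero⟩
  | succ m ih =>
    intro hm
    obtain ⟨ψ, hψ, hVψ⟩ := ih (by omega)
    let k : Fin N := ⟨m, hm⟩
    refine ⟨fun t => t ⟨k, by simp [k]⟩ * G k *ᵥ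
        ψ fun j => t ⟨j, by simpa using Nat.lt_succ_of_lt (Finset.mem_filter.1 j.2).2⟩,
      ?_, fun ω => ?_⟩
    · exact (measurable_pi_apply _).mul <| (measurable_mulVec _).comp <|
        hψ.comp <| measurable_pi_lambda _ fun j => measurable_pi_apply _
    · rw [hV.succ k ω, hVψ]

variable [MeasurableSpace Ω] {μ : Measure Ω}

theorem IsNoisyOrbit.indepFun_noise (hV : IsNoisyOrbit c G v₀ V) (h : iIndepFun c μ)
    (hc : ∀ k, AEMeasurable (c k) μ) (k : Fin N) : IndepFun (c k) (V k) μ := by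
  obtain ⟨ψ, hψ, hVψ⟩ := hV.exists_measurable_eq_comp k k.isLt.le
  rw [funext hVψ]
  exact h.indepFun_comp_finset hc (by simp) hψ

variable [DecidableEq d] [IsProbabilityMeasure μ]

theorem IsNoisyOrbit.moments (hV : IsNoisyOrbit c G v₀ V) (h : iIndepFun c μ)
    (hc : ∀ k, MemLp (c k) 2 μ) (hmean : ∀ k, ∫ ω, c k ω ∂μ = 1) {ε : ℝ} (hε : 0 ≤ ε)
    (hsq : ∀ k i, ∫ ω, c k ω i ^ 2 ∂μ ≤ 1 + ε) (hG : ∀ k, G k ∈ orthogonalGroup d ℝ)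
    {U : ℕ → d → ℝ} (hU0 : U 0 = v₀) (hU : ∀ k : Fin N, U (k + 1) = G k *ᵥ U k) :
    ∀ m ≤ N, MemLp (V m) 2 μ ∧ ∫ ω, V m ω ∂μ = U m ∧
      ∫ ω, ∑ i, V m ω i ^ 2 ∂μ ≤ (1 + ε) ^ m * ∑ i, v₀ i ^ 2 := by
  intro m
  induction m with
  | zero =>
    intro _
    rw [funext hV.zero, hU0]
    simp [memLp_const]
  | succ m ih =>
    intro hm
    obtain ⟨hVL2, hVmean, hVsq⟩ := ih (by omega)
    let k : Fin N := ⟨m, hm⟩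
    have hind : IndepFun (c k) (fun ω => G k *ᵥ V m ω) μ :=
      (hV.indepFun_noise h (fun k => (hc k).1.aemeasurable) k).comp measurable_id
        (measurable_mulVec _)
    have hGV : MemLp (fun ω => G k *ᵥ V m ω) 2 μ := memLp_mulVec _ hVL2
    rw [funext (hV.succ k)]
    refine ⟨hind.memLp_two_mul (hc k) hGV, ?_, ?_⟩
    · rw [hind.integral_mul_pi (hc k) hGV, hmean k, one_mul,
        integral_mulVec _ (hVL2.integrable one_le_two), hVmean]
      exact (hU k).symm
    · calc ∫ ω, ∑ i, (c k ω i * (G k *ᵥ V m ω) i) ^ 2 ∂μ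
          ≤ (1 + ε) * ∫ ω, ∑ i, (G k *ᵥ V m ω) i ^ 2 ∂μ :=
            hind.integral_sum_sq_mul_le (hc k) hGV (hsq k)
        _ = (1 + ε) * ∫ ω, ∑ i, V m ω i ^ 2 ∂μ := by
            simp only [sum_sq_mulVec_of_mem_orthogonalGroup (hG k)]
        _ ≤ (1 + ε) ^ (m + 1) * ∑ i, v₀ i ^ 2 := by
            rw [pow_succ', mul_assoc]
            exact mul_le_mul_of_nonneg_left hVsq (by linarith)

end NoisyOrbit

theorem stmt6_general (n NG Ns : ℕ)
    {Ω : Type*} [MeasurableSpace Ω] (μ : Measure Ω) [IsProbabilityMeasure μ]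
    (c : Fin NG → Ω → (Fin (4 ^ n) → ℝ))
    (hindep : iIndepFun c μ)
    (hL2 : ∀ k i, MemLp (fun ω => c k ω i) 2 μ)
    (hmean : ∀ k i, ∫ ω, c k ω i ∂μ = 1)
    (hsec : ∀ k i j, |(∫ ω, c k ω i * c k ω j ∂μ) - 1| ≤ 2 / Ns)
    (G : Fin NG → Matrix (Fin (4 ^ n)) (Fin (4 ^ n)) ℝ)
    (hG : ∀ k, G k ∈ Matrix.orthogonalGroup (Fin (4 ^ n)) ℝ)
    (v₀ : Fin (4 ^ n) → ℝ) (hv₀ : vecEnorm v₀ = 1)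
    (V : ℕ → Ω → (Fin (4 ^ n) → ℝ)) (hV0 : ∀ ω, V 0 ω = v₀)
    (hV : ∀ k : Fin NG, ∀ ω, V (k + 1) ω = fun i => c k ω i * (G k).mulVec (V k ω) i)
    (μN : Fin (4 ^ n) → ℝ) (hμN : μN = (((List.ofFn G).reverse).prod).mulVec v₀)
    (w : Fin (4 ^ n) → ℝ) (hw : vecEnorm w ≤ Real.sqrt (2 ^ n)) :
    Real.sqrt (∫ ω, (w ⬝ᵥ V NG ω - w ⬝ᵥ μN) ^ 2 ∂μ) ≤
      Real.sqrt (2 ^ n) * Real.sqrt (Real.exp (2 * NG / Ns) - 1) := by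
  have hc_mean : ∀ k, ∫ ω, c k ω ∂μ = 1 := fun k => funext fun i => by
    rw [eval_integral fun i => (hL2 k i).integrable one_le_two, hmean]
    rfl
  have hc_sq : ∀ k i, ∫ ω, c k ω i ^ 2 ∂μ ≤ 1 + 2 / Ns := fun k i => by
    simpa only [sq, sub_le_iff_le_add'] using (abs_le.1 (hsec k i i)).2
  obtain ⟨hVL2, hVmean, hVsq⟩ := IsNoisyOrbit.moments ⟨hV0, hV⟩ hindep
    (fun k => memLp_pi_iff.2 (hL2 k)) hc_mean (by positivity) hc_sq hG
    (U := fun m => ((List.ofFn G).take m).reverse.prod *ᵥ v₀) (by simp)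
    (fun k => by simp only [List.prod_reverse_take_ofFn_succ, mulVec_mulVec]) NG le_rfl
  have hVmean' : ∫ ω, V NG ω ∂μ = μN := by
    rw [hVmean, hμN, List.take_of_length_le (by simp)]
  have hv₀_sq : ∑ i, v₀ i ^ 2 = 1 := Real.sqrt_eq_one.1 hv₀
  have hμN_sq : ∑ i, μN i ^ 2 = 1 := by
    rw [hμN, sum_sq_mulVec_of_mem_orthogonalGroup (list_prod_mem fun A hA => ?_), hv₀_sq]
    obtain ⟨k, rfl⟩ := List.mem_ofFn.1 (List.mem_reverse.1 hA)
    exact hG k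
  have hw_sq : ∑ i, w i ^ 2 ≤ 2 ^ n := (Real.sqrt_le_sqrt_iff (by positivity)).1 hw
  have hexp : (1 + 2 / (Ns : ℝ)) ^ NG ≤ Real.exp (2 * NG / Ns) := by
    rw [show (2 * NG / Ns : ℝ) = NG * (2 / Ns) by ring]
    exact Real.one_add_pow_le_exp_mul (by linarith [show 0 ≤ 2 / (Ns : ℝ) by positivity]) NG
  have hmse : ∫ ω, (w ⬝ᵥ V NG ω - w ⬝ᵥ μN) ^ 2 ∂μ ≤ 2 ^ n * (Real.exp (2 * NG / Ns) - 1) :=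
    calc ∫ ω, (w ⬝ᵥ V NG ω - w ⬝ᵥ μN) ^ 2 ∂μ
        ≤ (∑ i, w i ^ 2) * (∫ ω, ∑ i, V NG ω i ^ 2 ∂μ - ∑ i, μN i ^ 2) :=
          hVmean' ▸ integral_sq_dotProduct_sub_integral_le hVL2 w
      _ ≤ (∑ i, w i ^ 2) * (Real.exp (2 * NG / Ns) - 1) := by
          rw [hμN_sq]
          rw [hv₀_sq, mul_one] at hVsq
          exact mul_le_mul_of_nonneg_left (by linarith) (by positivity)
      _ ≤ 2 ^ n * (Real.exp (2 * NG / Ns) - 1) :=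
          mul_le_mul_of_nonneg_right hw_sq (sub_nonneg.2 (Real.one_le_exp (by positivity)))
  calc Real.sqrt (∫ ω, (w ⬝ᵥ V NG ω - w ⬝ᵥ μN) ^ 2 ∂μ)
      ≤ Real.sqrt (2 ^ n * (Real.exp (2 * NG / Ns) - 1)) := Real.sqrt_le_sqrt hmse
    _ = Real.sqrt (2 ^ n) * Real.sqrt (Real.exp (2 * NG / Ns) - 1) :=
        Real.sqrt_mul (by positivity) _

/-- Proposition 3, Pauli-channel form: for an `n`-qubit circuit of `N_G`
gates protected by Monte Carlo-based QEM with `N_s` effective executions, the RMSE of the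
computational result satisfies
`√E[(wᵀV_{N_G} - wᵀμ)²] ≤ 2^{n/2} √(exp(2 N_G/N_s) - 1)` whenever `‖w‖ ≤ 2^{n/2}`. -/
theorem stmt6 (n NG Ns : ℕ) (hNs : 0 < Ns)
    {Ω : Type*} [MeasurableSpace Ω] (μ : Measure Ω) [IsProbabilityMeasure μ]
    (c : Fin NG → Ω → (Fin (4 ^ n) → ℝ))
    (hindep : iIndepFun c μ)
    (hL2 : ∀ k i, MemLp (fun ω => c k ω i) 2 μ)
    (hmean : ∀ k i, ∫ ω, c k ω i ∂μ = 1)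
    (hsec : ∀ k i j, |(∫ ω, c k ω i * c k ω j ∂μ) - 1| ≤ 2 / Ns)
    (G : Fin NG → Matrix (Fin (4 ^ n)) (Fin (4 ^ n)) ℝ)
    (hG : ∀ k, G k ∈ Matrix.orthogonalGroup (Fin (4 ^ n)) ℝ)
    (v₀ : Fin (4 ^ n) → ℝ) (hv₀ : vecEnorm v₀ = 1)
    (V : ℕ → Ω → (Fin (4 ^ n) → ℝ)) (hV0 : ∀ ω, V 0 ω = v₀)
    (hV : ∀ k : Fin NG, ∀ ω, V (k + 1) ω = fun i => c k ω i * (G k).mulVec (V k ω) i)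
    (μN : Fin (4 ^ n) → ℝ) (hμN : μN = (((List.ofFn G).reverse).prod).mulVec v₀)
    (w : Fin (4 ^ n) → ℝ) (hw : vecEnorm w ≤ Real.sqrt (2 ^ n)) :
    Real.sqrt (∫ ω, (w ⬝ᵥ V NG ω - w ⬝ᵥ μN) ^ 2 ∂μ) ≤
      Real.sqrt (2 ^ n) * Real.sqrt (Real.exp (2 * NG / Ns) - 1) :=
  stmt6_general n NG Ns μ c hindep hL2 hmean hsec G hG v₀ hv₀ V hV0 hV μN hμN w hw
end
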